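/- arXiv:math/0702465 — 5 statements merged into one kernel-verified Lean document; each statement's English description precedes it below -/
import Mathlib

section
/- Let V be a real inner product space and L : V → V a symmetric linear operator (⟨Lx, y⟩ = ⟨x, Ly⟩ for all x, y ∈ V). Suppose v₀, v₁ ∈ V are unit vectors and c₀ ≥ 0, c₁ ≥ 0, c₂ ∈ ℝ are constants such that L v₀ = −c₀ v₀, ⟨v₀, v₁⟩² = c₂, and ⟨Lw, w⟩ ≥ c₁‖w‖² for every w ∈ V with ⟨w, v₀⟩ = 0. Then every v ∈ V with ⟨v, v₁⟩ = 0 satisfies ⟨Lv, v⟩ ≥ (c₁c₂ − c₀(1 − c₂))‖v‖². -/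
open RealInnerProductSpace

/-!
Split `v = w + a • v₀` with `a = ⟪v, v₀⟫` and `w ⟂ v₀`. Since `v₀` is an eigenvector of the
symmetric `L`, the cross terms vanish and `⟪L v, v⟫ = ⟪L w, w⟫ - c₀ a² ≥ c₁ ‖v‖² - (c₀ + c₁) a²`.
On the other hand `v ⟂ v₁` gives `a = ⟪v, v₀ - ⟪v₀, v₁⟫ • v₁⟫`, and Cauchy–Schwarz bounds
`a² ≤ (1 - c₂) ‖v‖²`.
-/

namespace LinearMap.IsSymmetric

variable {V : Type*} [NormedAddCommGroup V] [InnerProductSpace ℝ V] {T : V →ₗ[ℝ] V}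

theorem inner_map_add_smul_eigenvector (hT : T.IsSymmetric) {v₀ w : V} {μ : ℝ}
    (hv₀ : T v₀ = μ • v₀) (hw : ⟪w, v₀⟫ = 0) (a : ℝ) :
    ⟪T (w + a • v₀), w + a • v₀⟫ = ⟪T w, w⟫ + μ * a ^ 2 * ‖v₀‖ ^ 2 := by
  have hTw : ⟪T w, v₀⟫ = 0 := by
    rw [hT, hv₀, real_inner_smul_right, hw, mul_zero]
  have hv₀w : ⟪v₀, w⟫ = 0 := by rw [real_inner_comm, hw]
  simp only [map_add, map_smul, hv₀, inner_add_left, inner_add_right, real_inner_smul_left,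
    real_inner_smul_right, hTw, hv₀w, real_inner_self_eq_norm_sq]
  ring

theorem inner_map_self_ge_of_eigenvector (hT : T.IsSymmetric) {v₀ : V} {μ c : ℝ}
    (hv₀ : ‖v₀‖ = 1) (hTv₀ : T v₀ = μ • v₀)
    (hlow : ∀ w : V, ⟪w, v₀⟫ = 0 → c * ‖w‖ ^ 2 ≤ ⟪T w, w⟫) (v : V) :
    c * ‖v‖ ^ 2 + (μ - c) * ⟪v, v₀⟫ ^ 2 ≤ ⟪T v, v⟫ := by
  set a := ⟪v, v₀⟫
  set w := v - a • v₀
  have hw : ⟪w, v₀⟫ = 0 := by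
    rw [inner_sub_left, real_inner_smul_left, real_inner_self_eq_norm_sq, hv₀]
    ring
  have hv : v = w + a • v₀ := (sub_add_cancel v _).symm
  have hnorm : ‖v‖ ^ 2 = ‖w‖ ^ 2 + a ^ 2 := by
    have horth : ⟪w, a • v₀⟫ = 0 := by rw [real_inner_smul_right, hw, mul_zero]
    rw [hv, norm_add_sq_real, horth, norm_smul, hv₀, Real.norm_eq_abs, mul_one, sq_abs]
    ring
  have hquad := hT.inner_map_add_smul_eigenvector hTv₀ hw a
  rw [hv₀, one_pow, mul_one, ← hv] at hquad
  rw [hnorm, hquad]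
  linarith [hlow w hw]

end LinearMap.IsSymmetric

theorem real_inner_sq_le_of_inner_eq_zero {V : Type*} [NormedAddCommGroup V]
    [InnerProductSpace ℝ V] {u v v₁ : V} (hv₁ : ‖v₁‖ = 1) (hv : ⟪v, v₁⟫ = 0) :
    ⟪v, u⟫ ^ 2 ≤ (‖u‖ ^ 2 - ⟪u, v₁⟫ ^ 2) * ‖v‖ ^ 2 := by
  set b := ⟪u, v₁⟫
  have hproj : ⟪v, u - b • v₁⟫ = ⟪v, u⟫ := by
    rw [inner_sub_right, real_inner_smul_right, hv, mul_zero, sub_zero]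
  have hnorm : ‖u - b • v₁‖ ^ 2 = ‖u‖ ^ 2 - b ^ 2 := by
    rw [norm_sub_sq_real, real_inner_smul_right, norm_smul, hv₁, Real.norm_eq_abs, mul_one,
      sq_abs]
    ring
  calc ⟪v, u⟫ ^ 2 = ⟪v, u - b • v₁⟫ ^ 2 := by rw [hproj]
    _ ≤ (‖v‖ * ‖u - b • v₁‖) ^ 2 := by
      rw [← sq_abs]; gcongr; exact abs_real_inner_le_norm _ _
    _ = (‖u‖ ^ 2 - b ^ 2) * ‖v‖ ^ 2 := by rw [mul_pow, hnorm, mul_comm]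

/-- Lemma on lower bounds for symmetric operators under a change of
orthogonality constraint (Lemma `l:lina` in the paper). -/
theorem symmetric_operator_lower_bound
    {V : Type*} [NormedAddCommGroup V] [InnerProductSpace ℝ V]
    (L : V →ₗ[ℝ] V) (hsym : ∀ x y : V, ⟪L x, y⟫ = ⟪x, L y⟫)
    (v₀ v₁ : V) (hv₀ : ‖v₀‖ = 1) (hv₁ : ‖v₁‖ = 1)
    (c₀ c₁ c₂ : ℝ) (hc₀ : 0 ≤ c₀) (hc₁ : 0 ≤ c₁)
    (hLv₀ : L v₀ = (-c₀) • v₀)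
    (hc₂ : ⟪v₀, v₁⟫ ^ 2 = c₂)
    (hlow : ∀ w : V, ⟪w, v₀⟫ = 0 → ⟪L w, w⟫ ≥ c₁ * ‖w‖ ^ 2)
    (v : V) (hv : ⟪v, v₁⟫ = 0) :
    ⟪L v, v⟫ ≥ (c₁ * c₂ - c₀ * (1 - c₂)) * ‖v‖ ^ 2 := by
  have hsplit : c₁ * ‖v‖ ^ 2 - (c₀ + c₁) * ⟪v, v₀⟫ ^ 2 ≤ ⟪L v, v⟫ := by
    have := LinearMap.IsSymmetric.inner_map_self_ge_of_eigenvector hsym hv₀ hLv₀ hlow v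
    linarith
  have hangle : ⟪v, v₀⟫ ^ 2 ≤ (1 - c₂) * ‖v‖ ^ 2 := by
    simpa [hv₀, hc₂] using real_inner_sq_le_of_inner_eq_zero (u := v₀) hv₁ hv
  linarith [mul_le_mul_of_nonneg_left hangle (add_nonneg hc₀ hc₁)]
end

section
/- Let q be a nonzero real number and let b, w : [0, ∞) → ℝ be continuously differentiable functions satisfying |b'(t)| ≤ |w(t)| and |w'(t)| ≤ |q| |b(t)| for all t ≥ 0. Then for all t ≥ 0: |b(t)| ≤ √2 · max(|q|^{1/2}|b(0)|, |w(0)|) · |q|^{−1/2} · exp(|q|^{1/2} t) and |w(t)| ≤ √2 · max(|q|^{1/2}|b(0)|, |w(0)|) · exp(|q|^{1/2} t). -/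
/-!
With `K = √|q|`, the vector `(K b, w)` satisfies `‖(K b, w)'‖ ≤ K ‖(K b, w)‖` in the sup norm on
`ℝ × ℝ`, so Grönwall's inequality gives `max (K |b t|) |w t| ≤ max (K |b 0|) |w 0| * exp (K t)`.
Both estimates follow, even without the factor `√2`.
-/

open Set Real

lemma norm_scaled_deriv_le {K b w b' w' : ℝ} (hK : 0 ≤ K) (h1 : |b'| ≤ |w|)
    (h2 : |w'| ≤ K ^ 2 * |b|) : ‖(K * b', w')‖ ≤ K * ‖(K * b, w)‖ := by
  simp only [Prod.norm_mk, norm_mul, Real.norm_eq_abs, abs_of_nonneg hK]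
  rw [mul_max_of_nonneg _ _ hK]
  refine max_le ?_ ?_
  · exact le_max_of_le_right (mul_le_mul_of_nonneg_left h1 hK)
  · exact le_max_of_le_left (by rwa [← mul_assoc, ← sq])

theorem max_abs_le_mul_exp_of_abs_deriv_le {K a : ℝ} (hK : 0 ≤ K) {b w b' w' : ℝ → ℝ}
    (hb : ∀ t ∈ Ici a, HasDerivWithinAt b (b' t) (Ici a) t)
    (hw : ∀ t ∈ Ici a, HasDerivWithinAt w (w' t) (Ici a) t)
    (h1 : ∀ t ∈ Ici a, |b' t| ≤ |w t|) (h2 : ∀ t ∈ Ici a, |w' t| ≤ K ^ 2 * |b t|)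
    {t : ℝ} (ht : a ≤ t) :
    max (K * |b t|) |w t| ≤ max (K * |b a|) |w a| * exp (K * (t - a)) := by
  have hf : ∀ s ∈ Ici a, HasDerivWithinAt (fun s ↦ (K * b s, w s)) (K * b' s, w' s) (Ici a) s :=
    fun s hs ↦ ((hb s hs).const_mul K).prodMk (hw s hs)
  have key := norm_le_gronwallBound_of_norm_deriv_right_le (f := fun s ↦ (K * b s, w s))
    (a := a) (b := t) (δ := ‖(K * b a, w a)‖) (ε := 0)
    (fun s hs ↦ (hf s hs.1).continuousWithinAt.mono Icc_subset_Ici_self)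
    (fun s hs ↦ (hf s hs.1).mono (Ici_subset_Ici.2 hs.1)) le_rfl
    (fun s hs ↦ by simpa using norm_scaled_deriv_le hK (h1 s hs.1) (h2 s hs.1)) t ⟨ht, le_rfl⟩
  simpa [gronwallBound_ε0, abs_of_nonneg hK] using key

theorem gronwall_estimate_general (q : ℝ) (hq : q ≠ 0) (b w b' w' : ℝ → ℝ)
    (hb : ∀ t ∈ Set.Ici (0 : ℝ), HasDerivWithinAt b (b' t) (Set.Ici 0) t)
    (hw : ∀ t ∈ Set.Ici (0 : ℝ), HasDerivWithinAt w (w' t) (Set.Ici 0) t)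
    (h1 : ∀ t ∈ Set.Ici (0 : ℝ), |b' t| ≤ |w t|)
    (h2 : ∀ t ∈ Set.Ici (0 : ℝ), |w' t| ≤ |q| * |b t|)
    (t : ℝ) (ht : 0 ≤ t) :
    |b t| ≤ Real.sqrt 2 * max (Real.sqrt |q| * |b 0|) (|w 0|) * (Real.sqrt |q|)⁻¹ *
        Real.exp (Real.sqrt |q| * t) ∧
    |w t| ≤ Real.sqrt 2 * max (Real.sqrt |q| * |b 0|) (|w 0|) *
        Real.exp (Real.sqrt |q| * t) := by
  set K := √|q|
  set B := max (K * |b 0|) |w 0| * exp (K * t)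
  have hK : 0 < K := sqrt_pos.2 (abs_pos.2 hq)
  have hK2 : K ^ 2 = |q| := sq_sqrt (abs_nonneg q)
  have hbound : max (K * |b t|) |w t| ≤ B := by
    simpa only [sub_zero] using max_abs_le_mul_exp_of_abs_deriv_le hK.le hb hw h1 (hK2 ▸ h2) ht
  have hB : B ≤ √2 * max (K * |b 0|) |w 0| * exp (K * t) := by
    rw [mul_assoc √2]
    exact le_mul_of_one_le_left (by positivity) (one_le_sqrt.2 one_le_two)
  constructor
  · rw [mul_right_comm _ K⁻¹, mul_comm _ K⁻¹, le_inv_mul_iff₀ hK]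
    exact (le_max_left _ _).trans (hbound.trans hB)
  · exact (le_max_right _ _).trans (hbound.trans hB)

/-- The Gronwall estimate \eqref{E:Gron} for the differential inequality
`|b'| ≤ |w|`, `|w'| ≤ |q||b|` on `[0,∞)`. -/
theorem gronwall_estimate (q : ℝ) (hq : q ≠ 0) (b w b' w' : ℝ → ℝ)
    (hb : ∀ t ∈ Set.Ici (0 : ℝ), HasDerivWithinAt b (b' t) (Set.Ici 0) t)
    (hw : ∀ t ∈ Set.Ici (0 : ℝ), HasDerivWithinAt w (w' t) (Set.Ici 0) t)
    (hb' : ContinuousOn b' (Set.Ici 0))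
    (hw' : ContinuousOn w' (Set.Ici 0))
    (h1 : ∀ t ∈ Set.Ici (0 : ℝ), |b' t| ≤ |w t|)
    (h2 : ∀ t ∈ Set.Ici (0 : ℝ), |w' t| ≤ |q| * |b t|)
    (t : ℝ) (ht : 0 ≤ t) :
    |b t| ≤ Real.sqrt 2 * max (Real.sqrt |q| * |b 0|) (|w 0|) * (Real.sqrt |q|)⁻¹ *
        Real.exp (Real.sqrt |q| * t) ∧
    |w t| ≤ Real.sqrt 2 * max (Real.sqrt |q| * |b 0|) (|w 0|) *
        Real.exp (Real.sqrt |q| * t) :=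
  gronwall_estimate_general q hq b w b' w' hb hw h1 h2 t ht
end

section
/- Fix δ ∈ (0, 1/2). There exists q₀ ∈ (0,1) such that for every real q with 0 < |q| ≤ q₀ the following holds. Let T > 0 satisfy T ≤ δ |q|^{−1/2} log(1/|q|). Let f : ℝ → ℝ be twice continuously differentiable with |f(x)| ≤ 1 and |f'(x)| ≤ 1 for all x. Let a, v, ε₁, ε₂ : [0,T] → ℝ be C¹ functions satisfying a'(t) = v(t) + ε₁(t) and v'(t) = q f(a(t)) + ε₂(t) on [0,T], with |ε₁(t)| ≤ |q|^{2−δ} and |ε₂(t)| ≤ |q|^{2−δ} for all t ∈ [0,T]. Let ā, v̄ : [0,T] → ℝ be C¹ functions satisfying the exact equations ā'(t) = v̄(t), v̄'(t) = q f(ā(t)) with the same initial data ā(0) = a(0), v̄(0) = v(0). Then for all t ∈ [0,T]: |a(t) − ā(t)| ≤ |q|^{1−2δ} log(1/|q|) and |v(t) − v̄(t)| ≤ |q|^{3/2−2δ} log(1/|q|). -/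
/-!
The errors `a - abar` and `v - vbar` obey the linear system `x' = y + ε₁`, `y' = q (f a - f abar) + ε₂`,
whose coupling is `|q|`-Lipschitz since `|f'| ≤ 1`. In the weighted norm `max (√|q| |x|) |y|` both
couplings have constant `√|q|`, so Grönwall's inequality bounds the weighted error by
`|q|^(2-δ) / √|q| · exp (√|q| t)`. The time limit makes `exp (√|q| t) ≤ |q|^(-δ)`, which leaves
`|q|^(3/2-2δ)`; the factor `log (1/|q|) ≥ 1` (for `|q| ≤ e⁻¹`) only weakens this.
-/

open Set Real
open scoped NNReal

section Gronwall

variable {E : Type*} [NormedAddCommGroup E] [NormedSpace ℝ E]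

theorem norm_le_gronwallBound_of_hasDerivWithinAt_Icc {f f' : ℝ → E} {δ K ε a b : ℝ}
    (hf : ∀ x ∈ Icc a b, HasDerivWithinAt f (f' x) (Icc a b) x) (ha : ‖f a‖ ≤ δ)
    (bound : ∀ x ∈ Ico a b, ‖f' x‖ ≤ K * ‖f x‖ + ε) :
    ∀ x ∈ Icc a b, ‖f x‖ ≤ gronwallBound δ K ε (x - a) := by
  refine norm_le_gronwallBound_of_norm_deriv_right_le
    (fun x hx => (hf x hx).continuousWithinAt) (fun x hx => ?_) ha bound
  have hIcc : Icc a b ∈ nhdsWithin x (Ici x) :=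
    Filter.mem_of_superset (Icc_mem_nhdsGE hx.2) (Icc_subset_Icc_left hx.1)
  exact (hf x (Ico_subset_Icc_self hx)).mono_of_mem_nhdsWithin hIcc

variable {F : E → E} {K : ℝ≥0} {a v abar vbar ε₁ ε₂ : ℝ → E} {T η₁ η₂ : ℝ}

theorem norm_sub_le_gronwallBound_of_perturbed_system (hF : LipschitzWith K F)
    (ha : ∀ t ∈ Icc 0 T, HasDerivWithinAt a (v t + ε₁ t) (Icc 0 T) t)
    (hv : ∀ t ∈ Icc 0 T, HasDerivWithinAt v (F (a t) + ε₂ t) (Icc 0 T) t)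
    (habar : ∀ t ∈ Icc 0 T, HasDerivWithinAt abar (vbar t) (Icc 0 T) t)
    (hvbar : ∀ t ∈ Icc 0 T, HasDerivWithinAt vbar (F (abar t)) (Icc 0 T) t)
    (hε₁ : ∀ t ∈ Icc 0 T, ‖ε₁ t‖ ≤ η₁) (hε₂ : ∀ t ∈ Icc 0 T, ‖ε₂ t‖ ≤ η₂)
    (ha0 : abar 0 = a 0) (hv0 : vbar 0 = v 0) :
    ∀ t ∈ Icc 0 T, max (√K * ‖a t - abar t‖) ‖v t - vbar t‖ ≤
      gronwallBound 0 √K (max (√K * η₁) η₂) t := by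
  set c := √(K : ℝ)
  have hc : 0 ≤ c := sqrt_nonneg _
  set g : ℝ → E × E := fun s => (c • (a s - abar s), v s - vbar s)
  have hg_norm : ∀ s, ‖g s‖ = max (c * ‖a s - abar s‖) ‖v s - vbar s‖ := fun s => by
    simp [g, Prod.norm_def, norm_smul, abs_of_nonneg hc]
  have hg : ∀ s ∈ Icc 0 T, HasDerivWithinAt g
      (c • (v s + ε₁ s - vbar s), F (a s) + ε₂ s - F (abar s)) (Icc 0 T) s := fun s hs =>
    (((ha s hs).sub (habar s hs)).const_smul c).prodMk ((hv s hs).sub (hvbar s hs))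
  have hg0 : ‖g 0‖ ≤ 0 := by simp [g, ha0, hv0]
  have hbound : ∀ s ∈ Ico 0 T, ‖(c • (v s + ε₁ s - vbar s), F (a s) + ε₂ s - F (abar s))‖ ≤
      c * ‖g s‖ + max (c * η₁) η₂ := by
    intro s hs
    have hsI := Ico_subset_Icc_self hs
    rw [hg_norm, Prod.norm_def, norm_smul, norm_of_nonneg hc]
    refine max_le ?_ ?_
    · calc c * ‖v s + ε₁ s - vbar s‖ ≤ c * (‖v s - vbar s‖ + η₁) := by
            rw [add_sub_right_comm]
            exact mul_le_mul_of_nonneg_left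
              ((norm_add_le _ _).trans (add_le_add_right (hε₁ s hsI) _)) hc
        _ ≤ c * max (c * ‖a s - abar s‖) ‖v s - vbar s‖ + max (c * η₁) η₂ := by
            rw [mul_add]
            exact add_le_add (mul_le_mul_of_nonneg_left (le_max_right _ _) hc) (le_max_left _ _)
    · calc ‖F (a s) + ε₂ s - F (abar s)‖ ≤ K * ‖a s - abar s‖ + η₂ := by
            rw [add_sub_right_comm]
            refine (norm_add_le _ _).trans (add_le_add ?_ (hε₂ s hsI))
            simpa only [← dist_eq_norm] using hF.dist_le_mul (a s) (abar s)
        _ = c * (c * ‖a s - abar s‖) + η₂ := by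
            rw [← mul_assoc, mul_self_sqrt K.coe_nonneg]
        _ ≤ c * max (c * ‖a s - abar s‖) ‖v s - vbar s‖ + max (c * η₁) η₂ :=
            add_le_add (mul_le_mul_of_nonneg_left (le_max_left _ _) hc) (le_max_right _ _)
  intro t ht
  simpa only [hg_norm, sub_zero] using
    norm_le_gronwallBound_of_hasDerivWithinAt_Icc hg hg0 hbound t ht

end Gronwall

theorem gronwallBound_sqrt_rpow_le {Q δ t : ℝ} (hQ : 0 < Q)
    (ht : t ≤ δ * Q ^ (-(1 : ℝ) / 2) * log (1 / Q)) :
    gronwallBound 0 √Q (Q ^ (2 - δ)) t ≤ Q ^ ((3 : ℝ) / 2 - 2 * δ) := by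
  have hsqrt : √Q = Q ^ ((1 : ℝ) / 2) := sqrt_eq_rpow Q
  have hc : 0 < √Q := sqrt_pos.2 hQ
  have hexp : exp (√Q * t) ≤ Q ^ (-δ) := by
    have hct : √Q * t ≤ δ * log (1 / Q) := by
      calc √Q * t ≤ √Q * (δ * Q ^ (-(1 : ℝ) / 2) * log (1 / Q)) :=
            mul_le_mul_of_nonneg_left ht hc.le
        _ = δ * log (1 / Q) := by
            have hinv : Q ^ ((1 : ℝ) / 2) * Q ^ (-(1 : ℝ) / 2) = 1 := by
              rw [← rpow_add hQ]; norm_num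
            rw [hsqrt]; linear_combination δ * log (1 / Q) * hinv
    calc exp (√Q * t) ≤ exp (δ * log (1 / Q)) := exp_le_exp.2 hct
      _ = Q ^ (-δ) := by rw [one_div, log_inv, rpow_def_of_pos hQ]; ring_nf
  calc gronwallBound 0 √Q (Q ^ (2 - δ)) t
      = Q ^ (2 - δ) / √Q * (exp (√Q * t) - 1) := by simp [gronwallBound_of_K_ne_0 hc.ne']
    _ ≤ Q ^ (2 - δ) / √Q * Q ^ (-δ) := by
        gcongr
        linarith [exp_pos (√Q * t)]
    _ = Q ^ ((3 : ℝ) / 2 - 2 * δ) := by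
        rw [hsqrt, ← rpow_sub hQ, ← rpow_add hQ]; ring_nf

theorem ODE_comparison_general (δ : ℝ) :
    ∃ q₀ : ℝ, 0 < q₀ ∧ q₀ < 1 ∧
      ∀ q : ℝ, 0 < |q| → |q| ≤ q₀ →
      ∀ T : ℝ, 0 < T → T ≤ δ * |q| ^ (-(1 : ℝ) / 2) * Real.log (1 / |q|) →
      ∀ f : ℝ → ℝ, ContDiff ℝ 2 f → (∀ x, |f x| ≤ 1) → (∀ x, |deriv f x| ≤ 1) →
      ∀ a v ε₁ ε₂ : ℝ → ℝ,
      (∀ t ∈ Set.Icc (0 : ℝ) T, HasDerivWithinAt a (v t + ε₁ t) (Set.Icc 0 T) t) →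
      (∀ t ∈ Set.Icc (0 : ℝ) T, HasDerivWithinAt v (q * f (a t) + ε₂ t) (Set.Icc 0 T) t) →
      ContDiffOn ℝ 1 ε₁ (Set.Icc 0 T) → ContDiffOn ℝ 1 ε₂ (Set.Icc 0 T) →
      (∀ t ∈ Set.Icc (0 : ℝ) T, |ε₁ t| ≤ |q| ^ ((2 : ℝ) - δ)) →
      (∀ t ∈ Set.Icc (0 : ℝ) T, |ε₂ t| ≤ |q| ^ ((2 : ℝ) - δ)) →
      ∀ abar vbar : ℝ → ℝ,
      (∀ t ∈ Set.Icc (0 : ℝ) T, HasDerivWithinAt abar (vbar t) (Set.Icc 0 T) t) →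
      (∀ t ∈ Set.Icc (0 : ℝ) T, HasDerivWithinAt vbar (q * f (abar t)) (Set.Icc 0 T) t) →
      abar 0 = a 0 → vbar 0 = v 0 →
      ∀ t ∈ Set.Icc (0 : ℝ) T,
        |a t - abar t| ≤ |q| ^ ((1 : ℝ) - 2 * δ) * Real.log (1 / |q|) ∧
        |v t - vbar t| ≤ |q| ^ ((3 : ℝ) / 2 - 2 * δ) * Real.log (1 / |q|) := by
  refine ⟨exp (-1), exp_pos _, exp_lt_one_iff.2 (by norm_num), ?_⟩
  intro q hq hq₀ T _ hT f hf _ hf' a v ε₁ ε₂ ha hv _ _ hε₁ hε₂ abar vbar habar hvbar ha0 hv0 t ht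
  have hlog : 1 ≤ log (1 / |q|) := by
    rw [one_div, log_inv, le_neg, ← log_exp (-1)]
    exact log_le_log hq hq₀
  have hF : LipschitzWith ‖q‖₊ (fun x => q * f x) := by
    have hf_lip : LipschitzWith 1 f := lipschitzWith_of_nnnorm_deriv_le
      (hf.differentiable (by norm_num)) fun x => by
        rw [← NNReal.coe_le_coe, coe_nnnorm]; exact hf' x
    exact mul_one ‖q‖₊ ▸ (lipschitzWith_smul q).comp hf_lip
  have hη : max (√|q| * |q| ^ ((2 : ℝ) - δ)) (|q| ^ ((2 : ℝ) - δ)) = |q| ^ ((2 : ℝ) - δ) :=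
    max_eq_right (mul_le_of_le_one_left (by positivity)
      (sqrt_le_one.2 (hq₀.trans (exp_lt_one_iff.2 (by norm_num)).le)))
  have hB := norm_sub_le_gronwallBound_of_perturbed_system hF ha hv habar hvbar hε₁ hε₂ ha0 hv0 t ht
  simp only [coe_nnnorm, Real.norm_eq_abs, hη] at hB
  obtain ⟨hpos, hvel⟩ := max_le_iff.1 (hB.trans (gronwallBound_sqrt_rpow_le hq (ht.2.trans hT)))
  refine ⟨?_, hvel.trans (le_mul_of_one_le_right (by positivity) hlog)⟩
  have hsplit : √|q| * |q| ^ ((1 : ℝ) - 2 * δ) = |q| ^ ((3 : ℝ) / 2 - 2 * δ) := by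
    rw [Real.sqrt_eq_rpow, ← rpow_add hq]; ring_nf
  exact (le_of_mul_le_mul_left (hpos.trans_eq hsplit.symm) (sqrt_pos.2 hq)).trans
    (le_mul_of_one_le_right (by positivity) hlog)

/-- ODE comparison lemma (Lemma `L:ODEcompare`): the perturbed system
`a' = v + ε₁`, `v' = q f(a) + ε₂` stays close to the exact system
`abar' = vbar`, `vbar' = q f(abar)` for times `T ≤ δ|q|^{-1/2} log(1/|q|)`. -/
theorem ODE_comparison (δ : ℝ) (hδ0 : 0 < δ) (hδ1 : δ < 1 / 2) :
    ∃ q₀ : ℝ, 0 < q₀ ∧ q₀ < 1 ∧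
      ∀ q : ℝ, 0 < |q| → |q| ≤ q₀ →
      ∀ T : ℝ, 0 < T → T ≤ δ * |q| ^ (-(1 : ℝ) / 2) * Real.log (1 / |q|) →
      ∀ f : ℝ → ℝ, ContDiff ℝ 2 f → (∀ x, |f x| ≤ 1) → (∀ x, |deriv f x| ≤ 1) →
      ∀ a v ε₁ ε₂ : ℝ → ℝ,
      (∀ t ∈ Set.Icc (0 : ℝ) T, HasDerivWithinAt a (v t + ε₁ t) (Set.Icc 0 T) t) →
      (∀ t ∈ Set.Icc (0 : ℝ) T, HasDerivWithinAt v (q * f (a t) + ε₂ t) (Set.Icc 0 T) t) →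
      ContDiffOn ℝ 1 ε₁ (Set.Icc 0 T) → ContDiffOn ℝ 1 ε₂ (Set.Icc 0 T) →
      (∀ t ∈ Set.Icc (0 : ℝ) T, |ε₁ t| ≤ |q| ^ ((2 : ℝ) - δ)) →
      (∀ t ∈ Set.Icc (0 : ℝ) T, |ε₂ t| ≤ |q| ^ ((2 : ℝ) - δ)) →
      ∀ abar vbar : ℝ → ℝ,
      (∀ t ∈ Set.Icc (0 : ℝ) T, HasDerivWithinAt abar (vbar t) (Set.Icc 0 T) t) →
      (∀ t ∈ Set.Icc (0 : ℝ) T, HasDerivWithinAt vbar (q * f (abar t)) (Set.Icc 0 T) t) →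
      abar 0 = a 0 → vbar 0 = v 0 →
      ∀ t ∈ Set.Icc (0 : ℝ) T,
        |a t - abar t| ≤ |q| ^ ((1 : ℝ) - 2 * δ) * Real.log (1 / |q|) ∧
        |v t - vbar t| ≤ |q| ^ ((3 : ℝ) / 2 - 2 * δ) * Real.log (1 / |q|) :=
  ODE_comparison_general δ
end

section
/- Let q ∈ ℝ, g = (a, v, γ, μ) ∈ ℝ³ × ℝ₊, and set u_g(x) = e^{iγ} e^{iv(x−a)} μ sech(μ(x−a)). Then (1/4)∫_ℝ |u_g'(x)|² dx − (1/4)∫_ℝ |u_g(x)|⁴ dx + (q/2)|u_g(0)|² = μv²/2 − μ³/6 + (q/2) μ² sech²(μa). In particular the Gross–Pitaevskii Hamiltonian H_q(u) = (1/4)∫(|∂ₓu|² − |u|⁴) + (q/2)|u(0)|² restricted to the manifold of solitons equals μv²/2 − μ³/6 + (q/2)μ² sech²(μa). -/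
/-!
Write `u_g = e^{iθ} p` with real phase `θ(x) = γ + v(x - a)` and real profile
`p(x) = μ sech(μ(x - a))`. Then `|u_g'|² = p'² + v²p²`, and since `sech' = -sech tanh` and
`tanh² = 1 - sech²`, every integrand is a combination of `sech²` and `sech⁴` evaluated at
`μ(x - a)`. The substitution `y = μ(x - a)` contributes a factor `μ⁻¹`, and
`∫ sech² = 2`, `∫ sech⁴ = 4/3` follow from the antiderivatives `tanh` and `tanh - tanh³/3`,
which tend to `±1` and `±2/3` at `±∞`.
-/

open MeasureTheory

/-- The soliton `u_g(x) = e^{iγ}e^{iv(x-a)} μ sech(μ(x-a))` associated to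
`g = (a, v, γ, μ) ∈ ℝ³ × ℝ₊`. -/
noncomputable def soliton (a v γ μ : ℝ) : ℝ → ℂ := fun x =>
  Complex.exp (Complex.I * γ) * Complex.exp (Complex.I * v * (x - a)) * μ *
    (↑(1 / Real.cosh (μ * (x - a))) : ℂ)

open Filter Set Topology Real

theorem integrable_deriv_of_nonneg {g g' : ℝ → ℝ} {m n : ℝ}
    (hderiv : ∀ x, HasDerivAt g (g' x) x) (hg' : ∀ x, 0 ≤ g' x)
    (hbot : Tendsto g atBot (𝓝 m)) (htop : Tendsto g atTop (𝓝 n)) : Integrable g' := by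
  have hIoi : IntegrableOn g' (Ioi 0) :=
    integrableOn_Ioi_deriv_of_nonneg' (fun x _ ↦ hderiv x) (fun x _ ↦ hg' x) htop
  have hIoi_neg : IntegrableOn (fun x ↦ g' (-x)) (Ioi 0) := by
    refine integrableOn_Ioi_deriv_of_nonneg' (g := fun x ↦ -g (-x)) (fun x _ ↦ ?_)
      (fun x _ ↦ hg' (-x)) (hbot.comp tendsto_neg_atTop_atBot).neg
    exact ((hderiv (-x)).comp x (hasDerivAt_neg x)).neg.congr_deriv (by ring)
  have hIio : IntegrableOn g' (Iio 0) := by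
    rw [← (Measure.measurePreserving_neg (volume : Measure ℝ)).integrableOn_comp_preimage
      (Homeomorph.neg ℝ).measurableEmbedding]
    simpa [Function.comp_def] using hIoi_neg
  rw [← integrableOn_univ, ← Iio_union_Ici (a := (0 : ℝ)), integrableOn_union,
    integrableOn_Ici_iff_integrableOn_Ioi]
  exact ⟨hIio, hIoi⟩

theorem integral_of_hasDerivAt_of_nonneg {g g' : ℝ → ℝ} {m n : ℝ}
    (hderiv : ∀ x, HasDerivAt g (g' x) x) (hg' : ∀ x, 0 ≤ g' x)
    (hbot : Tendsto g atBot (𝓝 m)) (htop : Tendsto g atTop (𝓝 n)) : ∫ x, g' x = n - m :=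
  integral_of_hasDerivAt_of_tendsto hderiv
    (integrable_deriv_of_nonneg hderiv hg' hbot htop) hbot htop

theorem Real.tanh_eq_one_sub_two_div (x : ℝ) : tanh x = 1 - 2 / (exp (2 * x) + 1) := by
  have h : exp (2 * x) = exp x * exp x := by rw [← exp_add, two_mul]
  rw [tanh_eq_sinh_div_cosh, sinh_eq, cosh_eq, exp_neg, h]
  field_simp
  ring

theorem Real.tendsto_tanh_atTop : Tendsto tanh atTop (𝓝 1) := by
  have h : Tendsto (fun x ↦ exp (2 * x) + 1) atTop atTop :=
    tendsto_atTop_add_const_right _ _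
      (tendsto_exp_atTop.comp (tendsto_id.const_mul_atTop two_pos))
  simpa [← tanh_eq_one_sub_two_div] using (h.const_div_atTop 2).const_sub 1

theorem Real.tendsto_tanh_atBot : Tendsto tanh atBot (𝓝 (-1)) := by
  simpa [Function.comp_def] using (tendsto_tanh_atTop.comp tendsto_neg_atBot_atTop).neg

theorem Real.one_sub_tanh_sq (x : ℝ) : 1 - tanh x ^ 2 = (1 / cosh x) ^ 2 := by
  have := (cosh_pos x).ne'
  rw [tanh_eq_sinh_div_cosh, div_pow, sinh_sq]
  field_simp
  ring

theorem Real.hasDerivAt_tanh (x : ℝ) : HasDerivAt tanh ((1 / cosh x) ^ 2) x := by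
  have h := (hasDerivAt_sinh x).div (hasDerivAt_cosh x) (cosh_pos x).ne'
  rw [show tanh = sinh / cosh from funext tanh_eq_sinh_div_cosh]
  refine h.congr_deriv ?_
  rw [← one_sub_tanh_sq, tanh_eq_sinh_div_cosh]
  have := (cosh_pos x).ne'
  field_simp

theorem Real.hasDerivAt_one_div_cosh (x : ℝ) :
    HasDerivAt (fun y ↦ 1 / cosh y) (-(1 / cosh x) * tanh x) x := by
  have h := (hasDerivAt_cosh x).inv (cosh_pos x).ne'
  simp only [one_div]
  refine h.congr_deriv ?_
  rw [tanh_eq_sinh_div_cosh]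
  ring

theorem Real.hasDerivAt_tanh_sub_tanh_pow_three_div_three (x : ℝ) :
    HasDerivAt (fun y ↦ tanh y - tanh y ^ 3 / 3) ((1 / cosh x) ^ 4) x := by
  refine ((hasDerivAt_tanh x).sub (((hasDerivAt_tanh x).pow 3).div_const 3)).congr_deriv ?_
  rw [show (1 / cosh x) ^ 4 = ((1 / cosh x) ^ 2) ^ 2 by ring, ← one_sub_tanh_sq]
  ring

theorem Real.integrable_one_div_cosh_sq : Integrable fun x ↦ (1 / cosh x) ^ 2 :=
  integrable_deriv_of_nonneg hasDerivAt_tanh (fun x ↦ by positivity)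
    tendsto_tanh_atBot tendsto_tanh_atTop

theorem Real.integral_one_div_cosh_sq : ∫ x, (1 / cosh x) ^ 2 = 2 := by
  rw [integral_of_hasDerivAt_of_nonneg hasDerivAt_tanh (fun x ↦ by positivity)
    tendsto_tanh_atBot tendsto_tanh_atTop]
  norm_num

theorem Real.tendsto_tanh_sub_tanh_pow_three_div_three_atTop :
    Tendsto (fun y ↦ tanh y - tanh y ^ 3 / 3) atTop (𝓝 (2 / 3)) := by
  convert tendsto_tanh_atTop.sub ((tendsto_tanh_atTop.pow 3).div_const 3) using 2
  norm_num

theorem Real.tendsto_tanh_sub_tanh_pow_three_div_three_atBot :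
    Tendsto (fun y ↦ tanh y - tanh y ^ 3 / 3) atBot (𝓝 (-(2 / 3))) := by
  convert tendsto_tanh_atBot.sub ((tendsto_tanh_atBot.pow 3).div_const 3) using 2
  norm_num

theorem Real.integrable_one_div_cosh_pow_four : Integrable fun x ↦ (1 / cosh x) ^ 4 :=
  integrable_deriv_of_nonneg hasDerivAt_tanh_sub_tanh_pow_three_div_three
    (fun x ↦ by positivity) tendsto_tanh_sub_tanh_pow_three_div_three_atBot
    tendsto_tanh_sub_tanh_pow_three_div_three_atTop

theorem Real.integral_one_div_cosh_pow_four : ∫ x, (1 / cosh x) ^ 4 = 4 / 3 := by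
  rw [integral_of_hasDerivAt_of_nonneg hasDerivAt_tanh_sub_tanh_pow_three_div_three
    (fun x ↦ by positivity) tendsto_tanh_sub_tanh_pow_three_div_three_atBot
    tendsto_tanh_sub_tanh_pow_three_div_three_atTop]
  norm_num

theorem integral_comp_mul_sub {E : Type*} [NormedAddCommGroup E] [NormedSpace ℝ E]
    (G : ℝ → E) (μ a : ℝ) : ∫ x, G (μ * (x - a)) = |μ⁻¹| • ∫ y, G y :=
  (integral_sub_right_eq_self (fun x ↦ G (μ * x)) a).trans (Measure.integral_comp_mul_left G μ)

theorem hasDerivAt_exp_ofReal_mul_I_mul_ofReal {θ f : ℝ → ℝ} {θ' f' x : ℝ}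
    (hθ : HasDerivAt θ θ' x) (hf : HasDerivAt f f' x) :
    HasDerivAt (fun y ↦ Complex.exp (θ y * Complex.I) * f y)
      (Complex.exp (θ x * Complex.I) * (f' + (θ' * f x : ℝ) * Complex.I)) x := by
  have hphase := (hθ.ofReal_comp.mul_const Complex.I).cexp
  refine (hphase.mul hf.ofReal_comp).congr_deriv ?_
  push_cast
  ring

theorem norm_exp_ofReal_mul_I_mul_sq (θ a b : ℝ) :
    ‖Complex.exp (θ * Complex.I) * (a + b * Complex.I)‖ ^ 2 = a ^ 2 + b ^ 2 := by
  rw [norm_mul, Complex.norm_exp_ofReal_mul_I, one_mul, Complex.sq_norm,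
    Complex.normSq_add_mul_I]

theorem soliton_eq (a v γ μ x : ℝ) :
    soliton a v γ μ x =
      Complex.exp ((γ + v * (x - a) : ℝ) * Complex.I) * (μ * (1 / cosh (μ * (x - a))) : ℝ) := by
  rw [soliton, mul_assoc _ (μ : ℂ), ← Complex.exp_add]
  push_cast
  ring_nf

theorem norm_soliton (a v γ μ x : ℝ) :
    ‖soliton a v γ μ x‖ = |μ| * (1 / cosh (μ * (x - a))) := by
  rw [soliton_eq, norm_mul, Complex.norm_exp_ofReal_mul_I, one_mul, Complex.norm_real,
    Real.norm_eq_abs, abs_mul, abs_of_pos (by positivity : 0 < 1 / cosh (μ * (x - a)))]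

theorem hasDerivAt_soliton (a v γ μ x : ℝ) :
    HasDerivAt (soliton a v γ μ)
      (Complex.exp ((γ + v * (x - a) : ℝ) * Complex.I) *
        ((-μ ^ 2 * (1 / cosh (μ * (x - a))) * tanh (μ * (x - a)) : ℝ) +
          (v * (μ * (1 / cosh (μ * (x - a)))) : ℝ) * Complex.I)) x := by
  have hlin : HasDerivAt (fun y ↦ μ * (y - a)) μ x := by
    simpa using ((hasDerivAt_id x).sub_const a).const_mul μ
  have hphase : HasDerivAt (fun y ↦ γ + v * (y - a)) v x := by
    simpa using (((hasDerivAt_id x).sub_const a).const_mul v).const_add γ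
  have hprofile : HasDerivAt (fun y ↦ μ * (1 / cosh (μ * (y - a))))
      (-μ ^ 2 * (1 / cosh (μ * (x - a))) * tanh (μ * (x - a))) x :=
    (((hasDerivAt_one_div_cosh _).comp x hlin).const_mul μ).congr_deriv (by ring)
  rw [show soliton a v γ μ = _ from funext (soliton_eq a v γ μ)]
  exact hasDerivAt_exp_ofReal_mul_I_mul_ofReal hphase hprofile

theorem norm_deriv_soliton_sq (a v γ μ x : ℝ) :
    ‖deriv (soliton a v γ μ) x‖ ^ 2 =
      (μ ^ 2 * v ^ 2 + μ ^ 4) * (1 / cosh (μ * (x - a))) ^ 2 -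
        μ ^ 4 * (1 / cosh (μ * (x - a))) ^ 4 := by
  rw [(hasDerivAt_soliton a v γ μ x).deriv, norm_exp_ofReal_mul_I_mul_sq]
  linear_combination -μ ^ 4 * (1 / cosh (μ * (x - a))) ^ 2 * one_sub_tanh_sq (μ * (x - a))

/-- The Gross–Pitaevskii Hamiltonian restricted to the manifold of solitons
(equation \eqref{eq:GPHM}):
`H_q(u_g) = μv²/2 - μ³/6 + (q/2) μ² sech²(μa)`. -/
theorem GP_hamiltonian_on_solitons (q a v γ : ℝ) (μ : ℝ) (hμ : 0 < μ) :
    (1 / 4) * (∫ x : ℝ, ‖deriv (soliton a v γ μ) x‖ ^ 2)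
      - (1 / 4) * (∫ x : ℝ, ‖soliton a v γ μ x‖ ^ 4)
      + (q / 2) * ‖soliton a v γ μ 0‖ ^ 2
    = μ * v ^ 2 / 2 - μ ^ 3 / 6 + (q / 2) * μ ^ 2 * (1 / Real.cosh (μ * a)) ^ 2 := by
  have habs : |μ⁻¹| = μ⁻¹ := abs_of_pos (inv_pos.2 hμ)
  have hkinetic : ∫ x, ‖deriv (soliton a v γ μ) x‖ ^ 2 =
      μ⁻¹ * ((μ ^ 2 * v ^ 2 + μ ^ 4) * 2 - μ ^ 4 * (4 / 3)) := by
    simp_rw [norm_deriv_soliton_sq]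
    rw [integral_comp_mul_sub (fun y ↦ (μ ^ 2 * v ^ 2 + μ ^ 4) * (1 / cosh y) ^ 2 -
        μ ^ 4 * (1 / cosh y) ^ 4), habs, smul_eq_mul,
      integral_sub (integrable_one_div_cosh_sq.const_mul _)
        (integrable_one_div_cosh_pow_four.const_mul _),
      integral_const_mul, integral_const_mul, integral_one_div_cosh_sq,
      integral_one_div_cosh_pow_four]
  have hpotential : ∫ x, ‖soliton a v γ μ x‖ ^ 4 = μ⁻¹ * (μ ^ 4 * (4 / 3)) := by
    simp_rw [norm_soliton, abs_of_pos hμ, mul_pow]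
    rw [integral_comp_mul_sub (fun y ↦ μ ^ 4 * (1 / cosh y) ^ 4), habs, smul_eq_mul,
      integral_const_mul, integral_one_div_cosh_pow_four]
  have hvalue : ‖soliton a v γ μ 0‖ ^ 2 = μ ^ 2 * (1 / cosh (μ * a)) ^ 2 := by
    rw [norm_soliton, abs_of_pos hμ, zero_sub, mul_neg, cosh_neg, mul_pow]
  rw [hkinetic, hpotential, hvalue]
  field_simp
  ring
end

section
/- Define the energy functional E(u) = (1/4)∫_ℝ (|u'(x)|² − |u(x)|⁴ + |u(x)|²) dx and let η(x) = sech x. Then for every H¹-admissible w : ℝ → ℂ, all the integrals defining E(η + w) are finite, the terms linear in w cancel (because η solves −(1/2)η'' − η³ + (1/2)η = 0), and |E(η + w) − E(η)| ≤ 8‖w‖²_{H¹} + 4‖w‖³_{H¹} + ‖w‖⁴_{H¹}. -/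
open MeasureTheory

/-- `η x = sech x`. -/
noncomputable def η (x : ℝ) : ℝ := 1 / Real.cosh x

/-- `w : ℝ → ℂ` is H¹-admissible: continuously differentiable with `w` and `w'` in `L²`. -/
def H1adm (w : ℝ → ℂ) : Prop :=
  ContDiff ℝ 1 w ∧ Integrable (fun x : ℝ => ‖w x‖ ^ 2) ∧
    Integrable (fun x : ℝ => ‖deriv w x‖ ^ 2)

/-- The `H¹` norm. -/
noncomputable def H1norm (w : ℝ → ℂ) : ℝ :=
  Real.sqrt (∫ x : ℝ, (‖w x‖ ^ 2 + ‖deriv w x‖ ^ 2))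

/-- The energy functional `E(u) = (1/4)∫ (|u'|² - |u|⁴ + |u|²)`. -/
noncomputable def energyE (u : ℝ → ℂ) : ℝ :=
  (1 / 4) * ∫ x : ℝ, (‖deriv u x‖ ^ 2 - ‖u x‖ ^ 4 + ‖u x‖ ^ 2)

/-!
Write `u = η + w`. Pointwise, the energy density of `u` is that of `η`, plus twice a term linear
in `(Re w, Re w')`, plus a remainder at least quadratic in `w`. Since `η'' = η - 2 η³`, integrating
by parts kills the linear term. With `0 < η ≤ 1`, `|η'| ≤ η` and the Sobolev bound
`‖w‖_∞ ≤ N := ‖w‖_{H¹}` (from `|w x|² = -∫_x^∞ (|w|²)'`), the remainder is dominated by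
`|w'|² + (7 + 4N + N²) |w|²`, whose integral is at most `(7 + 4N + N²) N²`. Integrability: `η` and
`η'` are in `L²` because `sech² x ≤ (1 + x²)⁻¹`, products of `L²` functions are integrable, and
`|u|⁴ ≤ (1 + N)² |u|²`.
-/

open Real Filter Set Topology

theorem sq_norm_le_integral_sq_norm_add_sq_norm_deriv {E : Type*} [NormedAddCommGroup E]
    [InnerProductSpace ℝ E] [CompleteSpace E] {w : ℝ → E} (hw : Differentiable ℝ w)
    (hw2 : Integrable fun x => ‖w x‖ ^ 2) (hw'2 : Integrable fun x => ‖deriv w x‖ ^ 2) (x : ℝ) :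
    ‖w x‖ ^ 2 ≤ ∫ y, (‖w y‖ ^ 2 + ‖deriv w y‖ ^ 2) := by
  set g' : ℝ → ℝ := fun y => 2 * inner ℝ (w y) (deriv w y)
  have hg : ∀ y, HasDerivAt (fun t => ‖w t‖ ^ 2) (g' y) y := fun y => (hw y).hasDerivAt.norm_sq
  have hg'_le : ∀ y, |g' y| ≤ ‖w y‖ ^ 2 + ‖deriv w y‖ ^ 2 := fun y => by
    rw [abs_mul, abs_two]
    nlinarith [abs_real_inner_le_norm (w y) (deriv w y), two_mul_le_add_sq ‖w y‖ ‖deriv w y‖]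
  have hsum : Integrable fun y => ‖w y‖ ^ 2 + ‖deriv w y‖ ^ 2 := hw2.add hw'2
  have hg'_int : Integrable g' :=
    hsum.mono' ((hw.continuous.aestronglyMeasurable.inner
      (aestronglyMeasurable_deriv w _)).const_mul 2)
      (Eventually.of_forall fun y => (Real.norm_eq_abs _).trans_le (hg'_le y))
  have hlim : Tendsto (fun t => ‖w t‖ ^ 2) atTop (𝓝 0) :=
    tendsto_zero_of_hasDerivAt_of_integrableOn_Ioi (a := x) (fun y _ => hg y)
      hg'_int.integrableOn hw2.integrableOn
  have hftc : ∫ y in Ioi x, g' y = 0 - ‖w x‖ ^ 2 :=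
    integral_Ioi_of_hasDerivAt_of_tendsto' (fun y _ => hg y) hg'_int.integrableOn hlim
  calc ‖w x‖ ^ 2 = -∫ y in Ioi x, g' y := by rw [hftc]; ring
    _ ≤ ∫ y in Ioi x, |g' y| := (neg_le_abs _).trans abs_integral_le_integral_abs
    _ ≤ ∫ y in Ioi x, (‖w y‖ ^ 2 + ‖deriv w y‖ ^ 2) :=
      integral_mono hg'_int.abs.integrableOn hsum.integrableOn hg'_le
    _ ≤ ∫ y, (‖w y‖ ^ 2 + ‖deriv w y‖ ^ 2) :=
      setIntegral_le_integral hsum (Eventually.of_forall fun y => by positivity)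

lemma integrable_norm_pow_four_of_norm_le {α E : Type*} [MeasurableSpace α] {μ : Measure α}
    [NormedAddCommGroup E] {f : α → E} {C : ℝ} (hf : AEStronglyMeasurable f μ)
    (hf2 : Integrable (fun x => ‖f x‖ ^ 2) μ) (hC : ∀ x, ‖f x‖ ≤ C) :
    Integrable (fun x => ‖f x‖ ^ 4) μ :=
  (hf2.const_mul (C ^ 2)).mono' (hf.norm.pow 4) (Eventually.of_forall fun x => by
    have := pow_le_pow_left₀ (norm_nonneg _) (hC x) 2
    rw [norm_of_nonneg (by positivity)]
    nlinarith [sq_nonneg ‖f x‖])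

lemma η_pos (x : ℝ) : 0 < η x := one_div_pos.mpr (cosh_pos x)

lemma η_le_one (x : ℝ) : η x ≤ 1 := by
  rw [η, div_le_one (cosh_pos x)]
  exact one_le_cosh x

lemma norm_ofReal_η_le_one (x : ℝ) : ‖(η x : ℂ)‖ ≤ 1 := by
  rw [Complex.norm_real, norm_of_nonneg (η_pos x).le]
  exact η_le_one x

@[fun_prop]
lemma continuous_η : Continuous η := by
  unfold η
  fun_prop (disch := exact fun x => (cosh_pos x).ne')

lemma hasDerivAt_η (x : ℝ) : HasDerivAt η (-sinh x / cosh x ^ 2) x := by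
  have h : η = cosh⁻¹ := funext fun x => one_div _
  exact h ▸ (hasDerivAt_cosh x).inv (cosh_pos x).ne'

lemma deriv_η : deriv η = fun x => -sinh x / cosh x ^ 2 :=
  funext fun x => (hasDerivAt_η x).deriv

@[fun_prop]
lemma continuous_deriv_η : Continuous (deriv η) := by
  rw [deriv_η]
  fun_prop (disch := exact fun x => (pow_pos (cosh_pos x) 2).ne')

lemma abs_deriv_η_le (x : ℝ) : |deriv η x| ≤ η x := by
  have hc := cosh_pos x
  have habs : |sinh x| ≤ cosh x := by
    rw [abs_le]; constructor <;> nlinarith [cosh_sq x]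
  rw [deriv_η, η, abs_div, abs_neg, abs_of_pos (pow_pos hc 2), div_le_div_iff₀ (pow_pos hc 2) hc]
  nlinarith

lemma hasDerivAt_deriv_η (x : ℝ) : HasDerivAt (deriv η) (η x - 2 * η x ^ 3) x := by
  have hc := (cosh_pos x).ne'
  rw [deriv_η]
  refine ((hasDerivAt_sinh x).neg.div ((hasDerivAt_cosh x).fun_pow 2)
    (pow_ne_zero 2 hc)).congr_deriv ?_
  simp only [η, Pi.neg_apply]
  field_simp
  norm_num
  linear_combination 2 * cosh x * sinh_sq x

lemma abs_η_sub_two_mul_η_cube_le (x : ℝ) : |η x - 2 * η x ^ 3| ≤ η x := by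
  have h0 := (η_pos x).le
  have h1 := η_le_one x
  rw [abs_le]; constructor <;> nlinarith [mul_nonneg h0 (mul_nonneg h0 h0)]

lemma integrable_η_sq : Integrable fun x => η x ^ 2 := by
  refine integrable_inv_one_add_sq.mono' (continuous_η.pow 2).aestronglyMeasurable
    (Eventually.of_forall fun x => ?_)
  have hsinh : x ^ 2 ≤ sinh x ^ 2 := by
    rw [← sq_abs x, ← sq_abs (sinh x), abs_sinh]
    exact pow_le_pow_left₀ (abs_nonneg x) (self_le_sinh_iff.mpr (abs_nonneg x)) 2
  rw [norm_of_nonneg (by positivity), η, div_pow, one_pow, cosh_sq, one_div]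
  exact inv_anti₀ (by positivity) (by linarith)

lemma memLp_η : MemLp η 2 :=
  (memLp_two_iff_integrable_sq_norm continuous_η.aestronglyMeasurable).mpr
    (by simpa using integrable_η_sq)

lemma memLp_deriv_η : MemLp (deriv η) 2 :=
  memLp_η.of_le continuous_deriv_η.aestronglyMeasurable
    (Eventually.of_forall fun x => by simpa [abs_of_pos (η_pos x)] using abs_deriv_η_le x)

lemma memLp_η_sub_two_mul_η_cube : MemLp (fun x => η x - 2 * η x ^ 3) 2 :=
  memLp_η.of_le (by fun_prop) (Eventually.of_forall fun x => by
    simpa [abs_of_pos (η_pos x)] using abs_η_sub_two_mul_η_cube_le x)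

theorem integral_deriv_η_mul_add_eq_zero {r r' : ℝ → ℝ} (hr : ∀ x, HasDerivAt r (r' x) x)
    (hr2 : MemLp r 2) (hr'2 : MemLp r' 2) :
    ∫ x, (deriv η x * r' x + (η x - 2 * η x ^ 3) * r x) = 0 := by
  have h1 : Integrable fun x => deriv η x * r' x := memLp_deriv_η.integrable_mul hr'2
  have h2 : Integrable fun x => (η x - 2 * η x ^ 3) * r x :=
    memLp_η_sub_two_mul_η_cube.integrable_mul hr2
  have hparts : ∫ x, deriv η x * r' x = -∫ x, (η x - 2 * η x ^ 3) * r x :=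
    integral_mul_deriv_eq_deriv_mul_of_integrable (fun x _ => hasDerivAt_deriv_η x)
      (fun x _ => hr x) h1 h2 (memLp_deriv_η.integrable_mul hr2)
  rw [integral_add h1 h2, hparts, neg_add_cancel]

lemma hasDerivAt_ofReal_η (x : ℝ) : HasDerivAt (fun y => (η y : ℂ)) ((deriv η x : ℝ) : ℂ) x :=
  (hasDerivAt_η x).differentiableAt.hasDerivAt.ofReal_comp

lemma deriv_ofReal_η : deriv (fun y => (η y : ℂ)) = fun x => ((deriv η x : ℝ) : ℂ) :=
  funext fun x => (hasDerivAt_ofReal_η x).deriv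

noncomputable def energyDensity (z z' : ℂ) : ℝ := ‖z'‖ ^ 2 - ‖z‖ ^ 4 + ‖z‖ ^ 2

def energyLinearTerm (e e' : ℝ) (z z' : ℂ) : ℝ := e' * z'.re - 2 * e ^ 3 * z.re + e * z.re

noncomputable def energyRemainder (e : ℝ) (z z' : ℂ) : ℝ :=
  ‖z'‖ ^ 2 + ‖z‖ ^ 2 - 4 * e ^ 2 * z.re ^ 2 - 2 * e ^ 2 * ‖z‖ ^ 2 - 4 * e * z.re * ‖z‖ ^ 2
    - ‖z‖ ^ 4

lemma energyE_eq (u : ℝ → ℂ) : energyE u = 1 / 4 * ∫ x, energyDensity (u x) (deriv u x) := rfl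

lemma energyDensity_ofReal_add (e e' : ℝ) (z z' : ℂ) :
    energyDensity (e + z) (e' + z') =
      energyDensity e e' + 2 * energyLinearTerm e e' z z' + energyRemainder e z z' := by
  have h4 : ∀ a : ℂ, ‖a‖ ^ 4 = (‖a‖ ^ 2) ^ 2 := fun a => by ring
  simp only [energyDensity, energyLinearTerm, energyRemainder, h4, Complex.sq_norm,
    Complex.normSq_apply, Complex.add_re, Complex.add_im, Complex.ofReal_re, Complex.ofReal_im]
  ring

lemma abs_energyRemainder_le {e N : ℝ} {z : ℂ} (z' : ℂ) (he0 : 0 ≤ e) (he1 : e ≤ 1)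
    (hz : ‖z‖ ≤ N) :
    |energyRemainder e z z'| ≤ ‖z'‖ ^ 2 + (7 + 4 * N + N ^ 2) * ‖z‖ ^ 2 := by
  have hre : |z.re| ≤ ‖z‖ := Complex.abs_re_le_norm z
  have hre2 : z.re ^ 2 ≤ ‖z‖ ^ 2 := sq_le_sq' (abs_le.mp hre).1 (abs_le.mp hre).2
  have he2 : e ^ 2 ≤ 1 := pow_le_one₀ he0 he1
  have hcubic : |e * z.re| ≤ N := by
    rw [abs_mul, abs_of_nonneg he0]
    nlinarith [abs_nonneg z.re]
  have hquartic : ‖z‖ ^ 4 ≤ N ^ 2 * ‖z‖ ^ 2 := by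
    have := pow_le_pow_left₀ (norm_nonneg z) hz 2
    nlinarith [sq_nonneg ‖z‖]
  have hz2 : 0 ≤ ‖z‖ ^ 2 := sq_nonneg _
  rw [energyRemainder, abs_le]
  constructor <;> nlinarith [abs_le.mp hcubic, mul_le_mul_of_nonneg_right he2 hz2,
    mul_le_mul_of_nonneg_right hre2 (sq_nonneg e), sq_nonneg z.re, sq_nonneg e,
    sq_nonneg ‖z'‖, mul_nonneg (sq_nonneg e) (sq_nonneg z.re)]

lemma integrable_energyDensity_η :
    Integrable fun x => energyDensity (η x) ((deriv η x : ℝ) : ℂ) := by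
  have h2 := (memLp_two_iff_integrable_sq_norm memLp_η.ofReal.1).1 (memLp_η.ofReal (K := ℂ))
  have h'2 := (memLp_two_iff_integrable_sq_norm memLp_deriv_η.ofReal.1).1
    (memLp_deriv_η.ofReal (K := ℂ))
  exact (h'2.sub (integrable_norm_pow_four_of_norm_le memLp_η.ofReal.1 h2
    norm_ofReal_η_le_one)).add h2

lemma H1norm_nonneg (w : ℝ → ℂ) : 0 ≤ H1norm w := sqrt_nonneg _

lemma sq_H1norm (w : ℝ → ℂ) : H1norm w ^ 2 = ∫ x, (‖w x‖ ^ 2 + ‖deriv w x‖ ^ 2) :=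
  sq_sqrt (integral_nonneg fun _ => by positivity)

namespace H1adm

variable {w : ℝ → ℂ}

lemma memLp (hw : H1adm w) : MemLp w 2 :=
  (memLp_two_iff_integrable_sq_norm hw.1.continuous.aestronglyMeasurable).mpr hw.2.1

lemma memLp_deriv (hw : H1adm w) : MemLp (deriv w) 2 :=
  (memLp_two_iff_integrable_sq_norm (hw.1.continuous_deriv le_rfl).aestronglyMeasurable).mpr
    hw.2.2

lemma hasDerivAt (hw : H1adm w) (x : ℝ) : HasDerivAt w (deriv w x) x :=
  (hw.1.differentiable one_ne_zero x).hasDerivAt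

lemma hasDerivAt_re (hw : H1adm w) (x : ℝ) :
    HasDerivAt (fun y => (w y).re) (deriv w x).re x :=
  Complex.reCLM.hasFDerivAt.comp_hasDerivAt x (hw.hasDerivAt x)

lemma norm_le_H1norm (hw : H1adm w) (x : ℝ) : ‖w x‖ ≤ H1norm w := by
  rw [H1norm, Real.le_sqrt (norm_nonneg _) (integral_nonneg fun _ => by positivity)]
  exact sq_norm_le_integral_sq_norm_add_sq_norm_deriv (hw.1.differentiable one_ne_zero) hw.2.1
    hw.2.2 x

lemma integral_sq_norm_add_integral_sq_norm_deriv (hw : H1adm w) :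
    (∫ x, ‖w x‖ ^ 2) + ∫ x, ‖deriv w x‖ ^ 2 = H1norm w ^ 2 := by
  rw [sq_H1norm, integral_add hw.2.1 hw.2.2]

lemma deriv_ofReal_η_add (hw : H1adm w) :
    deriv (fun y => (η y : ℂ) + w y) = fun x => ((deriv η x : ℝ) : ℂ) + deriv w x :=
  funext fun x => ((hasDerivAt_ofReal_η x).add (hw.hasDerivAt x)).deriv

lemma integrable_energy_integrands (hw : H1adm w) :
    Integrable (fun x => ‖((deriv η x : ℝ) : ℂ) + deriv w x‖ ^ 2) ∧
      Integrable (fun x => ‖(η x : ℂ) + w x‖ ^ 4) ∧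
      Integrable (fun x => ‖(η x : ℂ) + w x‖ ^ 2) := by
  have hu := memLp_η.ofReal (K := ℂ) |>.add hw.memLp
  have hu' := memLp_deriv_η.ofReal (K := ℂ) |>.add hw.memLp_deriv
  have hu2 := (memLp_two_iff_integrable_sq_norm hu.1).1 hu
  refine ⟨(memLp_two_iff_integrable_sq_norm hu'.1).1 hu',
    integrable_norm_pow_four_of_norm_le hu.1 hu2 (C := 1 + H1norm w) fun x => ?_, hu2⟩
  exact (norm_add_le _ _).trans (add_le_add (norm_ofReal_η_le_one x) (hw.norm_le_H1norm x))

lemma integrable_energyLinearTerm (hw : H1adm w) :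
    Integrable fun x => energyLinearTerm (η x) (deriv η x) (w x) (deriv w x) :=
  ((memLp_deriv_η.integrable_mul hw.memLp_deriv.re).add
    (memLp_η_sub_two_mul_η_cube.integrable_mul hw.memLp.re)).congr
    (Eventually.of_forall fun x => by
      simp only [energyLinearTerm, Pi.add_apply, Pi.mul_apply, RCLike.re_to_complex]; ring)

lemma integral_energyLinearTerm_eq_zero (hw : H1adm w) :
    ∫ x, energyLinearTerm (η x) (deriv η x) (w x) (deriv w x) = 0 := by
  rw [← integral_deriv_η_mul_add_eq_zero hw.hasDerivAt_re hw.memLp.re hw.memLp_deriv.re]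
  congr 1 with x
  rw [energyLinearTerm]
  ring

lemma energyE_ofReal_η_add_sub (hw : H1adm w) :
    energyE (fun x => (η x : ℂ) + w x) - energyE (fun x => (η x : ℂ)) =
      1 / 4 * ∫ x, energyRemainder (η x) (w x) (deriv w x) := by
  obtain ⟨h1, h2, h3⟩ := hw.integrable_energy_integrands
  have hDu : Integrable fun x => energyDensity (η x + w x) ((deriv η x : ℝ) + deriv w x) :=
    (h1.sub h2).add h3
  have hL := hw.integrable_energyLinearTerm.const_mul 2
  have hR : Integrable fun x => energyRemainder (η x) (w x) (deriv w x) :=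
    ((hDu.sub' integrable_energyDensity_η).sub' hL).congr
      (Eventually.of_forall fun x => by simp only [energyDensity_ofReal_add]; ring)
  simp only [energyE_eq, hw.deriv_ofReal_η_add, deriv_ofReal_η, energyDensity_ofReal_add]
  rw [integral_add (integrable_energyDensity_η.fun_add hL) hR,
    integral_add integrable_energyDensity_η hL, integral_const_mul,
    hw.integral_energyLinearTerm_eq_zero]
  ring

lemma abs_integral_energyRemainder_le (hw : H1adm w) :
    |∫ x, energyRemainder (η x) (w x) (deriv w x)|
      ≤ 8 * H1norm w ^ 2 + 4 * H1norm w ^ 3 + H1norm w ^ 4 := by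
  set N := H1norm w
  set c := 7 + 4 * N + N ^ 2 with hc_def
  have hN := H1norm_nonneg w
  have hc : 1 ≤ c := by rw [hc_def]; nlinarith [sq_nonneg N]
  have hbound : Integrable fun x => ‖deriv w x‖ ^ 2 + c * ‖w x‖ ^ 2 :=
    hw.2.2.add (hw.2.1.const_mul c)
  have hb : 0 ≤ ∫ x, ‖deriv w x‖ ^ 2 := integral_nonneg fun _ => by positivity
  calc |∫ x, energyRemainder (η x) (w x) (deriv w x)|
      ≤ ∫ x, |energyRemainder (η x) (w x) (deriv w x)| := abs_integral_le_integral_abs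
    _ ≤ ∫ x, (‖deriv w x‖ ^ 2 + c * ‖w x‖ ^ 2) :=
        integral_mono_of_nonneg (Eventually.of_forall fun _ => abs_nonneg _) hbound
          (Eventually.of_forall fun x => abs_energyRemainder_le _ (η_pos x).le (η_le_one x)
            (hw.norm_le_H1norm x))
    _ = (∫ x, ‖deriv w x‖ ^ 2) + c * ∫ x, ‖w x‖ ^ 2 := by
        rw [integral_add hw.2.2 (hw.2.1.const_mul c), integral_const_mul]
    _ ≤ c * N ^ 2 := by
        rw [← hw.integral_sq_norm_add_integral_sq_norm_deriv]
        nlinarith [mul_le_mul_of_nonneg_right hc hb]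
    _ ≤ 8 * N ^ 2 + 4 * N ^ 3 + N ^ 4 := by rw [hc_def]; nlinarith [sq_nonneg N]

end H1adm

/-- Estimate on the Lyapunov function `E(η+w) - E(η)` (estimate \eqref{E:line5}):
all integrals defining `E(η+w)` are finite, the terms linear in `w` cancel
(since `-(1/2)η'' - η³ + (1/2)η = 0`), and
`|E(η+w) - E(η)| ≤ 8‖w‖²_{H¹} + 4‖w‖³_{H¹} + ‖w‖⁴_{H¹}`. -/
theorem lyapunov_expansion_estimate (w : ℝ → ℂ) (hw : H1adm w) :
    Integrable (fun x : ℝ => ‖deriv (fun y : ℝ => (η y : ℂ) + w y) x‖ ^ 2) ∧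
    Integrable (fun x : ℝ => ‖(η x : ℂ) + w x‖ ^ 4) ∧
    Integrable (fun x : ℝ => ‖(η x : ℂ) + w x‖ ^ 2) ∧
    (∫ x : ℝ, (deriv η x * (deriv w x).re - 2 * η x ^ 3 * (w x).re
        + η x * (w x).re)) = 0 ∧
    |energyE (fun x : ℝ => (η x : ℂ) + w x) - energyE (fun x : ℝ => (η x : ℂ))|
      ≤ 8 * H1norm w ^ 2 + 4 * H1norm w ^ 3 + H1norm w ^ 4 := by
  obtain ⟨hu', hu4, hu2⟩ := hw.integrable_energy_integrands
  refine ⟨hw.deriv_ofReal_η_add ▸ hu', hu4, hu2, hw.integral_energyLinearTerm_eq_zero, ?_⟩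
  have hN := H1norm_nonneg w
  have hbound_nonneg : 0 ≤ 8 * H1norm w ^ 2 + 4 * H1norm w ^ 3 + H1norm w ^ 4 := by positivity
  rw [hw.energyE_ofReal_η_add_sub, abs_mul, abs_of_pos (by norm_num : (0 : ℝ) < 1 / 4)]
  linarith [hw.abs_integral_energyRemainder_le]
end
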